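/- Let k ≥ 1 and n ≥ 2 be integers. Let V₁, …, V_k be pairwise disjoint sets with union V, where for each i ∈ {1,…,k} the set Vᵢ is enumerated as Vᵢ = {vᵢ¹, …, vᵢⁿ} with n pairwise distinct elements. For each i, let Bᵢ := {{vᵢ¹,…,vᵢ^j} : 1 ≤ j ≤ n} ∪ {{vᵢ^j} : 1 ≤ j ≤ n} be the hierarchy of the caterpillar tree on Vᵢ and B̃ᵢ := {{vᵢ^j,…,vᵢⁿ} : 1 ≤ j ≤ n} ∪ {{vᵢ^j} : 1 ≤ j ≤ n} the hierarchy of the reversed caterpillar. Let K be any binary hierarchy on {1,…,k}, and define H_C := {⋃_{t∈A} V_t : A ∈ K} ∪ ⋃_{i=1}^{k} Bᵢ and H_C̃ := {⋃_{t∈A} V_t : A ∈ K} ∪ ⋃_{i=1}^{k} B̃ᵢ (the hierarchies of the trees C and C̃ obtained by substituting the caterpillars, respectively the reversed caterpillars, for the leaves of the binary tree with hierarchy K). Then for every subset L ⊆ V and every hierarchy F on L the following two statements are equivalent: (i) |L| = 2k, H_C|L ⊆ F and H_C̃|L ⊆ F (i.e., the tree with hierarchy F has size 2k and is compatible with {C,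 C̃}); (ii) there exist, for each i ∈ {1,…,k}, two distinct elements aᵢ, bᵢ ∈ Vᵢ such that L = {a₁, b₁, a₂, b₂, …, a_k, b_k} and F = {⋃_{t∈A} {a_t, b_t} : A ∈ K} ∪ {{x} : x ∈ L}. -/

import Mathlib

/-!
In a hierarchy `F` on `L` compatible with `C` and `C̃`, the traces on `L` of a prefix of the
caterpillar on `Vᵢ` and of a suffix of the reversed caterpillar through the same point `x ∈ L`
both lie in `F`; by laminarity they are nested, which forces `x` to be the first or the last
point of `L ∩ Vᵢ`. Hence `|L ∩ Vᵢ| ≤ 2` for every `i`, and `|L| = 2k` makes each `L ∩ Vᵢ` a pair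
`{aᵢ, bᵢ}`. Then `F` contains the `2k - 1` sets `⋃_{t ∈ A} {a_t, b_t}` (`A ∈ K`) and the `2k`
singletons, while a laminar family of nonempty subsets of a `2k`-set has at most `4k - 1`
members, so `F` consists of exactly these sets. The converse is a direct computation of traces.
-/

/-- `F` is a hierarchy on `L`: a family of nonempty subsets of `L` containing `L`
itself and all singletons, and laminar (any two members are disjoint or nested). -/
def IsHierarchy {α : Type*} (L : Set α) (F : Set (Set α)) : Prop :=
  (∀ A ∈ F, A ⊆ L ∧ A.Nonempty) ∧ L ∈ F ∧ (∀ x ∈ L, {x} ∈ F) ∧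
    ∀ A ∈ F, ∀ B ∈ F, A ∩ B = ∅ ∨ A ⊆ B ∨ B ⊆ A

/-- The restriction `H|L := {A ∩ L : A ∈ H, A ∩ L ≠ ∅}` of a family of sets `H`
to a set `L`. -/
def restrictH {α : Type*} (H : Set (Set α)) (L : Set α) : Set (Set α) :=
  {S | ∃ A ∈ H, S = A ∩ L ∧ S.Nonempty}

open Set Function

section

variable {α : Type*}

def IsLaminar (F : Set (Set α)) : Prop :=
  ∀ A ∈ F, ∀ B ∈ F, A ∩ B = ∅ ∨ A ⊆ B ∨ B ⊆ A

theorem IsHierarchy.isLaminar {L : Set α} {F : Set (Set α)} (hF : IsHierarchy L F) :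
    IsLaminar F :=
  hF.2.2.2

theorem IsLaminar.mono {F G : Set (Set α)} (hF : IsLaminar F) (hG : G ⊆ F) : IsLaminar G :=
  fun A hA B hB => hF A (hG hA) B (hG hB)

theorem IsLaminar.subset_insert_of_maximal {F : Set (Set α)} (hF : IsLaminar F) {L N : Set α}
    (hN : Maximal (· ∈ F \ {L}) N) :
    F ⊆ insert L ({A ∈ F | A ⊆ N} ∪ {A ∈ F | A ∩ N = ∅}) := by
  intro A hA
  by_cases hAL : A = L
  · exact Or.inl hAL
  right
  rcases hF A hA N hN.prop.1 with h | h | h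
  · exact Or.inr ⟨hA, h⟩
  · exact Or.inl ⟨hA, h⟩
  · exact Or.inl ⟨hA, hN.le_of_ge ⟨hA, hAL⟩ h⟩

theorem IsLaminar.ncard_le {F : Set (Set α)} (hF : IsLaminar F) {L : Set α} (hL : L.Finite)
    (hFL : ∀ A ∈ F, A ⊆ L ∧ A.Nonempty) : F.ncard ≤ 2 * L.ncard - 1 := by
  induction hm : L.ncard using Nat.strong_induction_on generalizing L F with
  | _ m ih =>
  subst hm
  have hFfin : F.Finite := hL.finite_subsets.subset fun A hA => (hFL A hA).1
  rcases (F \ {L}).eq_empty_or_nonempty with honly | hne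
  · rcases F.eq_empty_or_nonempty with rfl | ⟨A, hA⟩
    · simp
    have hLpos := (ncard_pos hL).2 ((hFL A hA).2.mono (hFL A hA).1)
    have hF1 := ncard_le_ncard (sdiff_eq_empty.1 honly) (finite_singleton L)
    rw [ncard_singleton] at hF1
    omega
  obtain ⟨N, hN⟩ := hFfin.sdiff.exists_maximal hne
  obtain ⟨hNF, hNL⟩ := hN.prop
  have hNsub : N ⊆ L := (hFL N hNF).1
  have hNpos : 0 < N.ncard := (ncard_pos (hL.subset hNsub)).2 (hFL N hNF).2
  have hNlt : N.ncard < L.ncard := ncard_lt_ncard (hNsub.ssubset_of_ne hNL) hL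
  have hdiff : (L \ N).ncard + N.ncard = L.ncard := ncard_sdiff_add_ncard_of_subset hNsub hL
  have h₁ := ih _ hNlt (F := {A ∈ F | A ⊆ N}) (hF.mono (sep_subset F _)) (hL.subset hNsub)
    (fun A hA => ⟨hA.2, (hFL A hA.1).2⟩) rfl
  have h₂ := ih _ (by omega) (F := {A ∈ F | A ∩ N = ∅}) (hF.mono (sep_subset F _)) hL.sdiff
    (fun A hA => ⟨subset_sdiff.2 ⟨(hFL A hA.1).1, disjoint_iff_inter_eq_empty.2 hA.2⟩,
      (hFL A hA.1).2⟩) rfl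
  have hsplit := ncard_le_ncard (hF.subset_insert_of_maximal hN)
    (((hFfin.subset (sep_subset F _)).union (hFfin.subset (sep_subset F _))).insert L)
  have := ncard_insert_le L ({A ∈ F | A ⊆ N} ∪ {A ∈ F | A ∩ N = ∅})
  have := ncard_union_le {A ∈ F | A ⊆ N} {A ∈ F | A ∩ N = ∅}
  omega

theorem IsLaminar.isLeast_or_isGreatest {ι : Type*} [LinearOrder ι] {F : Set (Set α)}
    (hF : IsLaminar F) {L : Set α} {f : ι → α} (hf : Injective f)
    (hpre : ∀ j, f j ∈ L → f '' Iic j ∩ L ∈ F) (hsuf : ∀ j, f j ∈ L → f '' Ici j ∩ L ∈ F)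
    {j : ι} (hj : f j ∈ L) : IsLeast (f ⁻¹' L) j ∨ IsGreatest (f ⁻¹' L) j := by
  rcases hF _ (hpre j hj) _ (hsuf j hj) with h | h | h
  · exact (eq_empty_iff_forall_notMem.1 h (f j)
      ⟨⟨mem_image_of_mem f self_mem_Iic, hj⟩, mem_image_of_mem f self_mem_Ici, hj⟩).elim
  · refine Or.inl ⟨hj, fun i hi => (le_total i j).elim (fun hij => ?_) id⟩
    exact (hf.mem_set_image (s := Ici j)).1 (h ⟨mem_image_of_mem f hij, hi⟩).1
  · refine Or.inr ⟨hj, fun i hi => (le_total j i).elim (fun hji => ?_) id⟩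
    exact (hf.mem_set_image (s := Iic j)).1 (h ⟨mem_image_of_mem f hji, hi⟩).1

theorem IsLaminar.ncard_inter_range_le_two {ι : Type*} [LinearOrder ι] {F H H' : Set (Set α)}
    (hF : IsLaminar F) {L : Set α} {f : ι → α} (hf : Injective f)
    (hH : restrictH H L ⊆ F) (hH' : restrictH H' L ⊆ F)
    (hpre : ∀ j, f '' Iic j ∈ H) (hsuf : ∀ j, f '' Ici j ∈ H') :
    (L ∩ range f).ncard ≤ 2 := by
  have hends : ∀ j ∈ f ⁻¹' L, IsLeast (f ⁻¹' L) j ∨ IsGreatest (f ⁻¹' L) j := fun j hj =>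
    hF.isLeast_or_isGreatest hf
      (fun j hj => hH ⟨_, hpre j, rfl, f j, mem_image_of_mem f self_mem_Iic, hj⟩)
      (fun j hj => hH' ⟨_, hsuf j, rfl, f j, mem_image_of_mem f self_mem_Ici, hj⟩) hj
  have hleast : {j | IsLeast (f ⁻¹' L) j}.Subsingleton := fun _ h _ h' => h.unique h'
  have hgreatest : {j | IsGreatest (f ⁻¹' L) j}.Subsingleton := fun _ h _ h' => h.unique h'
  rw [← image_preimage_eq_inter_range, ncard_image_of_injective _ hf]
  calc (f ⁻¹' L).ncard
      ≤ ({j | IsLeast (f ⁻¹' L) j} ∪ {j | IsGreatest (f ⁻¹' L) j}).ncard :=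
        ncard_le_ncard hends (hleast.finite.union hgreatest.finite)
    _ ≤ 1 + 1 := (ncard_union_le _ _).trans (add_le_add
        ((ncard_le_one hleast.finite).2 hleast) ((ncard_le_one hgreatest.finite).2 hgreatest))

section Blocks

variable {ι : Type*} {V : ι → Set α} {L : Set α}

theorem pairwise_disjoint_range_of_injective_uncurry {κ : Type*} {v : ι → κ → α}
    (hv : Injective (uncurry v)) : Pairwise (Disjoint on fun i => range (v i)) := by
  intro i j hij
  rw [onFun, disjoint_left]
  rintro _ ⟨s, rfl⟩ ⟨t, hts⟩
  exact hij (congrArg Prod.fst (@hv (j, t) (i, s) hts)).symm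

theorem eq_iUnion_inter_of_subset (hLV : L ⊆ ⋃ i, V i) : L = ⋃ i, L ∩ V i := by
  rw [← inter_iUnion, inter_eq_left.2 hLV]

theorem iUnion_inter_eq_of_subset {p : ι → Set α} (hV : Pairwise (Disjoint on V))
    (hp : ∀ i, p i ⊆ V i) (i : ι) : (⋃ j, p j) ∩ V i = p i := by
  refine subset_antisymm ?_ fun x hx => ⟨mem_iUnion.2 ⟨i, hx⟩, hp i hx⟩
  rintro x ⟨hx, hxi⟩
  obtain ⟨j, hxj⟩ := mem_iUnion.1 hx
  obtain rfl : j = i := by_contra fun hji => (hV hji).ne_of_mem (hp j hxj) hxi rfl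
  exact hxj

theorem ncard_eq_sum_ncard_inter [Fintype ι] (hV : Pairwise (Disjoint on V))
    (hLV : L ⊆ ⋃ i, V i) (hL : L.Finite) : L.ncard = ∑ i, (L ∩ V i).ncard := by
  conv_lhs => rw [eq_iUnion_inter_of_subset hLV]
  rw [ncard_iUnion_of_finite (fun i => hL.inter_of_left _)
    (fun i j hij => (hV hij).mono inter_subset_right inter_subset_right),
    finsum_eq_sum_of_fintype]

theorem ncard_inter_eq_two [Fintype ι] (hV : Pairwise (Disjoint on V)) (hLV : L ⊆ ⋃ i, V i)
    (hL : L.Finite) (hcard : L.ncard = 2 * Fintype.card ι) (hle : ∀ i, (L ∩ V i).ncard ≤ 2)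
    (i : ι) : (L ∩ V i).ncard = 2 := by
  have hsum : ∑ i, (L ∩ V i).ncard = ∑ _i : ι, 2 := by
    rw [← ncard_eq_sum_ncard_inter hV hLV hL, hcard, Finset.sum_const, Finset.card_univ,
      smul_eq_mul, mul_comm]
  exact (Finset.sum_eq_sum_iff_of_le fun i _ => hle i).1 hsum i (Finset.mem_univ i)

theorem ncard_eq_two_mul_card [Fintype ι] (hV : Pairwise (Disjoint on V)) (hLV : L ⊆ ⋃ i, V i)
    (hL : L.Finite) (htwo : ∀ i, (L ∩ V i).ncard = 2) : L.ncard = 2 * Fintype.card ι := by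
  rw [ncard_eq_sum_ncard_inter hV hLV hL, Finset.sum_congr rfl fun i _ => htwo i]
  simp [mul_comm]

end Blocks

section Substitution

variable {ι : Type*} {K : Set (Set ι)} {L : Set α}

def substH (K : Set (Set ι)) (p : ι → Set α) : Set (Set α) :=
  {S | ∃ A ∈ K, S = ⋃ t ∈ A, p t}

def singletonsH (L : Set α) : Set (Set α) :=
  {S | ∃ x ∈ L, S = {x}}

theorem substH_eq_image (K : Set (Set ι)) (p : ι → Set α) :
    substH K p = (fun A => ⋃ t ∈ A, p t) '' K := by
  ext S
  exact ⟨fun ⟨A, hA, h⟩ => ⟨A, hA, h.symm⟩, fun ⟨A, hA, h⟩ => ⟨A, hA, h.symm⟩⟩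

theorem singletonsH_eq_image (L : Set α) : singletonsH L = (fun x => {x}) '' L := by
  ext S
  exact ⟨fun ⟨x, hx, h⟩ => ⟨x, hx, h.symm⟩, fun ⟨x, hx, h⟩ => ⟨x, hx, h.symm⟩⟩

theorem restrictH_substH {V p : ι → Set α} (hK : ∀ A ∈ K, A.Nonempty)
    (hp : ∀ t, (p t).Nonempty) (hLV : ∀ t, L ∩ V t = p t) :
    restrictH (substH K V) L = substH K p := by
  have htrace : ∀ A : Set ι, (⋃ t ∈ A, V t) ∩ L = ⋃ t ∈ A, p t := fun A => by
    simp_rw [iUnion₂_inter, inter_comm _ L, hLV]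
  ext S
  constructor
  · rintro ⟨_, ⟨A, hA, rfl⟩, rfl, -⟩
    exact ⟨A, hA, htrace A⟩
  · rintro ⟨A, hA, rfl⟩
    obtain ⟨t, ht⟩ := hK A hA
    exact ⟨_, ⟨A, hA, rfl⟩, (htrace A).symm, (hp t).mono (subset_biUnion_of_mem ht)⟩

theorem ncard_substH_union_singletonsH [Finite ι] {p : ι → Set α}
    (hp : Pairwise (Disjoint on p)) (hpnt : ∀ t, (p t).Nontrivial) (hK : ∀ A ∈ K, A.Nonempty)
    (hL : L.Finite) : (substH K p ∪ singletonsH L).ncard = K.ncard + L.ncard := by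
  have hdisj : Disjoint (substH K p) (singletonsH L) := by
    rw [disjoint_left]
    rintro _ ⟨A, hA, rfl⟩ ⟨x, -, hx⟩
    obtain ⟨t, ht⟩ := hK A hA
    exact not_nontrivial_singleton (hx ▸ (hpnt t).mono (subset_biUnion_of_mem ht))
  rw [ncard_union_eq hdisj (substH_eq_image K p ▸ K.toFinite.image _)
    (singletonsH_eq_image L ▸ hL.image _), substH_eq_image, singletonsH_eq_image,
    ncard_image_of_injective _ (hp.biUnion_injective fun t => (hpnt t).nonempty),
    ncard_image_of_injective _ singleton_injective]

theorem IsHierarchy.eq_substH_inter_union_singletonsH [Finite ι] {F : Set (Set α)}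
    {V : ι → Set α} (hF : IsHierarchy L F) (hL : L.Finite) (hV : Pairwise (Disjoint on V))
    (hnt : ∀ i, (L ∩ V i).Nontrivial) (hK : ∀ A ∈ K, A.Nonempty)
    (hcard : 2 * L.ncard - 1 ≤ K.ncard + L.ncard) (hKF : restrictH (substH K V) L ⊆ F) :
    F = substH K (fun i => L ∩ V i) ∪ singletonsH L := by
  rw [restrictH_substH hK (fun i => (hnt i).nonempty) fun i => rfl] at hKF
  have hG : substH K (fun i => L ∩ V i) ∪ singletonsH L ⊆ F :=
    union_subset hKF (by rintro _ ⟨x, hx, rfl⟩; exact hF.2.2.1 x hx)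
  refine (eq_of_subset_of_ncard_le hG ?_ (hL.finite_subsets.subset fun A hA => (hF.1 A hA).1)).symm
  rw [ncard_substH_union_singletonsH (fun i j hij => (hV hij).mono inter_subset_right
    inter_subset_right) hnt hK hL]
  exact (hF.isLaminar.ncard_le hL hF.1).trans hcard

theorem restrictH_substH_union_subset {V : ι → Set α} {a b : ι → α} {B : ι → Set (Set α)}
    (hK : ∀ A ∈ K, A.Nonempty) (hKsing : ∀ i, {i} ∈ K) (hLV : ∀ i, L ∩ V i = {a i, b i})
    (hB : ∀ i, ∀ S ∈ B i, S ⊆ V i) :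
    restrictH (substH K V ∪ ⋃ i, B i) L ⊆ substH K (fun i => {a i, b i}) ∪ singletonsH L := by
  rintro _ ⟨S, hS | hS, rfl, hne⟩
  · rw [← restrictH_substH hK (fun i => insert_nonempty _ _) hLV]
    exact Or.inl ⟨S, hS, rfl, hne⟩
  obtain ⟨i, hSi⟩ := mem_iUnion.1 hS
  have hpair : {a i, b i} ⊆ L := by rw [← hLV i]; exact inter_subset_left
  have hsub : S ∩ L ⊆ {a i, b i} := by
    rw [← hLV i]; exact fun x hx => ⟨hx.2, hB i S hSi hx.1⟩
  rcases subset_pair_iff_eq.1 hsub with h | h | h | h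
  · exact absurd h hne.ne_empty
  · exact Or.inr ⟨a i, hpair (mem_insert _ _), h⟩
  · exact Or.inr ⟨b i, hpair (mem_insert_of_mem _ rfl), h⟩
  · exact Or.inl ⟨{i}, hKsing i, by rw [h, biUnion_singleton]⟩

end Substitution

end

theorem mct_control_general {α : Type*} (k n : ℕ)
    -- `v i j` is the element `vᵢ^j` of `Vᵢ`; all the `vᵢ^j` are pairwise distinct,
    -- which makes the sets `Vᵢ` pairwise disjoint, each of cardinality `n`
    (v : Fin k → Fin n → α)
    (hv : Function.Injective fun p : Fin k × Fin n => v p.1 p.2)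
    -- `K` is a binary hierarchy on `{1, …, k}` (binary ⇔ it has `2k - 1` members)
    (K : Set (Set (Fin k)))
    (hK : IsHierarchy Set.univ K ∧ K.ncard = 2 * k - 1) :
    let Vs : Fin k → Set α := fun i => Set.range (v i)
    let V : Set α := ⋃ i, Vs i
    -- the hierarchy `Bᵢ` of the caterpillar tree `Rₙ[vᵢ¹, …, vᵢⁿ]`
    let Bs : Fin k → Set (Set α) := fun i =>
      {S | ∃ j : Fin n, S = v i '' {t | t ≤ j}} ∪ {S | ∃ j : Fin n, S = {v i j}}
    -- the hierarchy `B̃ᵢ` of the reversed caterpillar tree `Rₙ[vᵢⁿ, …, vᵢ¹]`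
    let Bts : Fin k → Set (Set α) := fun i =>
      {S | ∃ j : Fin n, S = v i '' {t | j ≤ t}} ∪ {S | ∃ j : Fin n, S = {v i j}}
    -- the hierarchy of the tree `C` obtained by substituting the caterpillars
    -- for the leaves of the binary tree with hierarchy `K`
    let HC : Set (Set α) := {S | ∃ A ∈ K, S = ⋃ t ∈ A, Vs t} ∪ ⋃ i, Bs i
    -- the hierarchy of the tree `C̃` (with the reversed caterpillars)
    let HCt : Set (Set α) := {S | ∃ A ∈ K, S = ⋃ t ∈ A, Vs t} ∪ ⋃ i, Bts i
    ∀ L : Set α, L ⊆ V → ∀ F : Set (Set α), IsHierarchy L F →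
      ((L.ncard = 2 * k ∧ restrictH HC L ⊆ F ∧ restrictH HCt L ⊆ F) ↔
        (∃ a b : Fin k → α,
          (∀ i, a i ∈ Vs i ∧ b i ∈ Vs i ∧ a i ≠ b i) ∧
          L = ⋃ i, ({a i, b i} : Set α) ∧
          F = {S | ∃ A ∈ K, S = ⋃ t ∈ A, ({a t, b t} : Set α)} ∪
            {S | ∃ x ∈ L, S = {x}})) := by
  intro Vs V Bs Bts HC HCt L hLV F hF
  have hVs : Pairwise (Disjoint on Vs) := pairwise_disjoint_range_of_injective_uncurry hv
  have hLfin : L.Finite := (finite_iUnion fun i => finite_range (v i)).subset hLV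
  have hKne : ∀ A ∈ K, A.Nonempty := fun A hA => (hK.1.1 A hA).2
  constructor
  · rintro ⟨hcard, hC, hCt⟩
    have hle : ∀ i, (L ∩ Vs i).ncard ≤ 2 := fun i =>
      hF.isLaminar.ncard_inter_range_le_two (hv.comp (Prod.mk_right_injective i)) hC hCt
        (fun j => Or.inr (mem_iUnion.2 ⟨i, Or.inl ⟨j, rfl⟩⟩))
        (fun j => Or.inr (mem_iUnion.2 ⟨i, Or.inl ⟨j, rfl⟩⟩))
    choose a b hab hLab using fun i => ncard_eq_two.1
      (ncard_inter_eq_two hVs hLV hLfin (by rw [hcard, Fintype.card_fin]) hle i)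
    have hFeq := hF.eq_substH_inter_union_singletonsH hLfin hVs
      (fun i => hLab i ▸ nontrivial_pair (hab i)) hKne (by rw [hK.2, hcard]; omega)
      fun S ⟨A, hA, hS⟩ => hC ⟨A, Or.inl hA, hS⟩
    simp only [hLab] at hFeq
    have hpairs : ∀ i, a i ∈ L ∩ Vs i ∧ b i ∈ L ∩ Vs i := fun i => by simp [hLab]
    exact ⟨a, b, fun i => ⟨(hpairs i).1.2, (hpairs i).2.2, hab i⟩,
      (eq_iUnion_inter_of_subset hLV).trans (iUnion_congr hLab), hFeq⟩
  · rintro ⟨a, b, hab, rfl, rfl⟩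
    have hLab : ∀ i, (⋃ j, {a j, b j}) ∩ Vs i = {a i, b i} :=
      iUnion_inter_eq_of_subset hVs fun i => pair_subset (hab i).1 (hab i).2.1
    have hKsing : ∀ i, {i} ∈ K := fun i => hK.1.2.2.1 i (mem_univ i)
    have hB : ∀ i, ∀ S ∈ Bs i ∪ Bts i, S ⊆ Vs i := by
      rintro i S ((⟨j, rfl⟩ | ⟨j, rfl⟩) | ⟨j, rfl⟩ | ⟨j, rfl⟩) <;>
        first | exact image_subset_range _ _ | exact singleton_subset_iff.2 (mem_range_self j)
    refine ⟨?_, restrictH_substH_union_subset hKne hKsing hLab fun i S hS => hB i S (Or.inl hS),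
      restrictH_substH_union_subset hKne hKsing hLab fun i S hS => hB i S (Or.inr hS)⟩
    simpa using ncard_eq_two_mul_card hVs hLV hLfin fun i => by rw [hLab, ncard_pair (hab i).2.2]

theorem mct_control {α : Type*} (k n : ℕ) (hk : 1 ≤ k) (hn : 2 ≤ n)
    -- `v i j` is the element `vᵢ^j` of `Vᵢ`; all the `vᵢ^j` are pairwise distinct,
    -- which makes the sets `Vᵢ` pairwise disjoint, each of cardinality `n`
    (v : Fin k → Fin n → α)
    (hv : Function.Injective fun p : Fin k × Fin n => v p.1 p.2)
    -- `K` is a binary hierarchy on `{1, …, k}` (binary ⇔ it has `2k - 1` members)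
    (K : Set (Set (Fin k)))
    (hK : IsHierarchy Set.univ K ∧ K.ncard = 2 * k - 1) :
    let Vs : Fin k → Set α := fun i => Set.range (v i)
    let V : Set α := ⋃ i, Vs i
    -- the hierarchy `Bᵢ` of the caterpillar tree `Rₙ[vᵢ¹, …, vᵢⁿ]`
    let Bs : Fin k → Set (Set α) := fun i =>
      {S | ∃ j : Fin n, S = v i '' {t | t ≤ j}} ∪ {S | ∃ j : Fin n, S = {v i j}}
    -- the hierarchy `B̃ᵢ` of the reversed caterpillar tree `Rₙ[vᵢⁿ, …, vᵢ¹]`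
    let Bts : Fin k → Set (Set α) := fun i =>
      {S | ∃ j : Fin n, S = v i '' {t | j ≤ t}} ∪ {S | ∃ j : Fin n, S = {v i j}}
    -- the hierarchy of the tree `C` obtained by substituting the caterpillars
    -- for the leaves of the binary tree with hierarchy `K`
    let HC : Set (Set α) := {S | ∃ A ∈ K, S = ⋃ t ∈ A, Vs t} ∪ ⋃ i, Bs i
    -- the hierarchy of the tree `C̃` (with the reversed caterpillars)
    let HCt : Set (Set α) := {S | ∃ A ∈ K, S = ⋃ t ∈ A, Vs t} ∪ ⋃ i, Bts i
    ∀ L : Set α, L ⊆ V → ∀ F : Set (Set α), IsHierarchy L F →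
      ((L.ncard = 2 * k ∧ restrictH HC L ⊆ F ∧ restrictH HCt L ⊆ F) ↔
        (∃ a b : Fin k → α,
          (∀ i, a i ∈ Vs i ∧ b i ∈ Vs i ∧ a i ≠ b i) ∧
          L = ⋃ i, ({a i, b i} : Set α) ∧
          F = {S | ∃ A ∈ K, S = ⋃ t ∈ A, ({a t, b t} : Set α)} ∪
            {S | ∃ x ∈ L, S = {x}})) :=
  mct_control_general k n v hv K hK
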